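/- Suppose a sequence of continuous bounded functions e_n : [0,∞) → Y satisfies ‖e_n(t)‖ ≤ g_n(t) + ∫₀^t Q e^{-ω(t-τ)} ‖e_{n-1}'(τ)‖ dτ for all n ≥ 1 and t ≥ 0, where each g_n(t) → 0 as t → ∞, and e_{n-1} is continuously differentiable with bounded derivative. Then limsup_{t→∞} ‖e_n(t)‖ ≤ (Q/ω) · limsup_{t→∞} ‖e_{n-1}'(t)‖. -/

import Mathlib

/-!
Split the convolution integral at a time `T` after which `‖e'‖ ≤ K`. The part over `[0, T]` is at
most `M' / ω · exp (-ω (t - T))` and dies out as `t → ∞`, while the part over `[T, t]` is at most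
`K / ω` since the exponential kernel has total mass at most `1 / ω`. Hence
`limsup ‖e‖ ≤ Q K / ω` for every `K > limsup ‖e'‖`, and one lets `K` decrease to `limsup ‖e'‖`.
-/

open Filter Real Set Topology intervalIntegral

section ExpKernel

variable {ω : ℝ}

theorem integral_exp_neg_mul_sub (hω : ω ≠ 0) (s a t : ℝ) :
    ∫ τ in s..a, exp (-ω * (t - τ)) = (exp (-ω * (t - a)) - exp (-ω * (t - s))) / ω := by
  have hderiv : ∀ τ, HasDerivAt (fun τ => exp (-ω * (t - τ)) / ω) (exp (-ω * (t - τ))) τ := by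
    intro τ
    have hlin : HasDerivAt (fun τ : ℝ => -ω * (t - τ)) ω τ := by
      simpa using ((hasDerivAt_id τ).const_sub t).const_mul (-ω)
    simpa [mul_div_cancel_right₀ _ hω] using hlin.exp.div_const ω
  rw [integral_eq_sub_of_hasDerivAt (fun τ _ => hderiv τ)
    ((by fun_prop : Continuous _).intervalIntegrable _ _), sub_div]

theorem integral_exp_neg_mul_sub_mul_le {f : ℝ → ℝ} {K s a : ℝ} (hω : 0 < ω) (hsa : s ≤ a)
    (hf : IntervalIntegrable f MeasureTheory.volume s a) (hfK : ∀ τ ∈ Icc s a, f τ ≤ K)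
    (hK : 0 ≤ K) (t : ℝ) :
    ∫ τ in s..a, exp (-ω * (t - τ)) * f τ ≤ K / ω * exp (-ω * (t - a)) := by
  calc ∫ τ in s..a, exp (-ω * (t - τ)) * f τ
      ≤ ∫ τ in s..a, K * exp (-ω * (t - τ)) := by
        refine integral_mono_on hsa (hf.continuousOn_mul (by fun_prop))
          ((by fun_prop : Continuous _).intervalIntegrable _ _) ?_
        intro τ hτ
        rw [mul_comm K]
        exact mul_le_mul_of_nonneg_left (hfK τ hτ) (exp_pos _).le
    _ = K / ω * (exp (-ω * (t - a)) - exp (-ω * (t - s))) := by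
        rw [integral_const_mul, integral_exp_neg_mul_sub hω.ne', mul_div_assoc']
        ring
    _ ≤ K / ω * exp (-ω * (t - a)) := by
        gcongr
        exact sub_le_self _ (exp_pos _).le

theorem tendsto_exp_neg_mul_sub_atTop (hω : 0 < ω) (T : ℝ) :
    Tendsto (fun t => exp (-ω * (t - T))) atTop (𝓝 0) := by
  refine tendsto_exp_atBot.comp ?_
  simp_rw [neg_mul, tendsto_neg_atBot_iff]
  exact (tendsto_atTop_add_const_right _ (-T) tendsto_id).const_mul_atTop hω

theorem integral_exp_neg_mul_sub_mul_le_of_le_on_Ici {f : ℝ → ℝ} {M K T t : ℝ} (hω : 0 < ω)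
    (hf : Continuous f) (hfM : ∀ τ, f τ ≤ M) (hM : 0 ≤ M) (hfK : ∀ τ ≥ T, f τ ≤ K)
    (hK : 0 ≤ K) (hT : 0 ≤ T) (hTt : T ≤ t) :
    ∫ τ in (0 : ℝ)..t, exp (-ω * (t - τ)) * f τ ≤ M / ω * exp (-ω * (t - T)) + K / ω := by
  have hint : ∀ a b, IntervalIntegrable (fun τ => exp (-ω * (t - τ)) * f τ)
      MeasureTheory.volume a b := fun _ _ => (by fun_prop : Continuous _).intervalIntegrable _ _
  have head := integral_exp_neg_mul_sub_mul_le hω hT (hf.intervalIntegrable _ _)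
    (fun τ _ => hfM τ) hM t
  have tail := integral_exp_neg_mul_sub_mul_le hω hTt (hf.intervalIntegrable _ _)
    (fun τ hτ => hfK τ hτ.1) hK t
  rw [sub_self, mul_zero, exp_zero, mul_one] at tail
  rw [← integral_add_adjacent_intervals (hint 0 T) (hint T t)]
  exact add_le_add head tail

end ExpKernel

theorem limsup_le_of_le_add_integral_exp_kernel {u f g : ℝ → ℝ} {Q ω M K : ℝ} (hQ : 0 ≤ Q)
    (hω : 0 < ω) (hu : ∀ t, 0 ≤ u t) (hf : Continuous f) (hf0 : ∀ τ, 0 ≤ f τ)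
    (hfM : ∀ τ, f τ ≤ M) (hfK : ∀ᶠ τ in atTop, f τ ≤ K) (hg : Tendsto g atTop (𝓝 0))
    (hrec : ∀ t ≥ (0 : ℝ), u t ≤ g t + ∫ τ in (0 : ℝ)..t, Q * exp (-ω * (t - τ)) * f τ) :
    limsup u atTop ≤ Q / ω * K := by
  obtain ⟨T₀, hT₀⟩ := eventually_atTop.1 hfK
  set T := max T₀ 0
  have hfT : ∀ τ ≥ T, f τ ≤ K := fun τ hτ => hT₀ τ (le_of_max_le_left hτ)
  have hK : 0 ≤ K := (hf0 T).trans (hfT T le_rfl)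
  have hM : 0 ≤ M := (hf0 0).trans (hfM 0)
  set bound := fun t => g t + Q * (M / ω * exp (-ω * (t - T)) + K / ω)
  have hbound : ∀ t ≥ T, u t ≤ bound t := by
    intro t ht
    refine (hrec t ((le_max_right _ _).trans ht)).trans ?_
    simp_rw [mul_assoc Q, integral_const_mul, bound]
    gcongr
    exact integral_exp_neg_mul_sub_mul_le_of_le_on_Ici hω hf hfM hM hfT hK (le_max_right _ _) ht
  have hlim : Tendsto bound atTop (𝓝 (Q / ω * K)) := by
    have := hg.add ((((tendsto_exp_neg_mul_sub_atTop hω T).const_mul (M / ω)).add_const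
      (K / ω)).const_mul Q)
    convert this using 2
    ring
  calc limsup u atTop
      ≤ limsup bound atTop := limsup_le_limsup (eventually_atTop.2 ⟨T, hbound⟩)
        (isCoboundedUnder_le_of_le _ hu) hlim.isBoundedUnder_le
    _ = Q / ω * K := hlim.limsup_eq

theorem stmt15_general {Y : Type*} [NormedAddCommGroup Y]
    (e e' : ℝ → Y) (gn : ℝ → ℝ) (Q ω : ℝ) (hQ : 0 ≤ Q) (hω : 0 < ω)
    (hcont' : Continuous e') (hbdd' : ∃ M', ∀ t, ‖e' t‖ ≤ M')
    (hgn : Filter.Tendsto gn Filter.atTop (nhds 0))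
    (hrec : ∀ t ≥ (0:ℝ), ‖e t‖ ≤ gn t
      + ∫ τ in (0:ℝ)..t, Q * Real.exp (-ω * (t - τ)) * ‖e' τ‖) :
    Filter.limsup (fun t => ‖e t‖) Filter.atTop
      ≤ (Q / ω) * Filter.limsup (fun t => ‖e' t‖) Filter.atTop := by
  obtain ⟨M', hM'⟩ := hbdd'
  have hbdd : IsBoundedUnder (· ≤ ·) atTop (fun t => ‖e' t‖) := isBoundedUnder_of ⟨M', hM'⟩
  have hlimsup_le : ∀ K > limsup (fun t => ‖e' t‖) atTop,
      limsup (fun t => ‖e t‖) atTop ≤ Q / ω * K :=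
    fun K hK => limsup_le_of_le_add_integral_exp_kernel hQ hω (fun _ => norm_nonneg _)
      hcont'.norm (fun _ => norm_nonneg _) hM'
      ((eventually_lt_of_limsup_lt hK hbdd).mono fun _ => le_of_lt) hgn hrec
  exact ge_of_tendsto ((continuous_const_mul _).tendsto _ |>.mono_left nhdsWithin_le_nhds)
    (eventually_nhdsWithin_of_forall (s := Ioi _) hlimsup_le)

theorem stmt15 {Y : Type*} [NormedAddCommGroup Y] [NormedSpace ℝ Y]
    (e ePrev e' : ℝ → Y) (gn : ℝ → ℝ) (Q ω : ℝ) (hQ : 0 ≤ Q) (hω : 0 < ω)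
    (hgn0 : ∀ t, 0 ≤ gn t)
    (hcont : Continuous e) (hbdd : ∃ M, ∀ t, ‖e t‖ ≤ M)
    (hderiv : ∀ t, HasDerivAt ePrev (e' t) t)
    (hcont' : Continuous e') (hbdd' : ∃ M', ∀ t, ‖e' t‖ ≤ M')
    (hgn : Filter.Tendsto gn Filter.atTop (nhds 0))
    (hrec : ∀ t ≥ (0:ℝ), ‖e t‖ ≤ gn t
      + ∫ τ in (0:ℝ)..t, Q * Real.exp (-ω * (t - τ)) * ‖e' τ‖) :
    Filter.limsup (fun t => ‖e t‖) Filter.atTop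
      ≤ (Q / ω) * Filter.limsup (fun t => ‖e' t‖) Filter.atTop :=
  stmt15_general e e' gn Q ω hQ hω hcont' hbdd' hgn hrec
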